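/- arXiv:2103.12717 — 5 statements merged into one kernel-verified Lean document; each statement's English description precedes it below -/
import Mathlib

section
/- Let 𝒢 be a finite groupoid and ε a U(1)-valued groupoid 1-cocycle on 𝒢. Then Σ_{[g] ∈ π₀(Λ𝒢)} ε(g) / |Aut_{Λ𝒢}(g)| = dim_ℂ V_𝒢(ε), i.e. the groupoid integral of the transgressed 0-cocycle t(ε)(g) = ε(g) over the loop groupoid Λ𝒢 equals the complex dimension of the vector space V_𝒢(ε). (This is the 'crossing with the circle' condition ∫_{Λ𝒢} t(ε) = Dim_ℂ V_𝒢(ε); applied to 𝒢 = Λ³G, ε = t³(π) it gives Dim_ℂ 𝒵^π_G(𝕋³) = 𝒵^π_G(𝕋⁴).) -/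
open CategoryTheory

/-- A `U(1)`-valued groupoid 1-cocycle on a groupoid `G`. -/
structure OneCocycle (G : Type) [Groupoid.{0} G] : Type where
  toFun : ∀ {X Y : G}, (X ⟶ Y) → ℂ
  abs_toFun : ∀ {X Y : G} (g : X ⟶ Y), ‖toFun g‖ = 1
  cocycle : ∀ {X Y Z : G} (g : X ⟶ Y) (h : Y ⟶ Z), toFun (g ≫ h) = toFun g * toFun h

/-- The loops of a groupoid `G`, i.e. the objects of the loop groupoid `Λ𝒢`. -/
abbrev Loop (G : Type) [Groupoid.{0} G] : Type := Σ X : G, X ⟶ X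

/-- Two loops are related iff they are connected in the loop groupoid `Λ𝒢`, i.e. one is a
conjugate of the other. -/
def loopRel {G : Type} [Groupoid.{0} G] (l l' : Loop G) : Prop :=
  ∃ h : l.1 ⟶ l'.1, Groupoid.inv h ≫ l.2 ≫ h = l'.2

/-- The automorphism group of a loop `l` as an object of the loop groupoid `Λ𝒢`. -/
abbrev LoopAut {G : Type} [Groupoid.{0} G] (l : Loop G) : Type :=
  {h : l.1 ⟶ l.1 // Groupoid.inv h ≫ l.2 ≫ h = l.2}

/-- The vector space `V_𝒢(ε)` of functions `s` on objects with `s(Y) = ε(g) s(X)` for every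
morphism `g : X ⟶ Y`. -/
noncomputable def Veps {G : Type} [Groupoid.{0} G] (ε : OneCocycle G) :
    Submodule ℂ (G → ℂ) where
  carrier := {s | ∀ (X Y : G) (g : X ⟶ Y), s Y = ε.toFun g * s X}
  add_mem' := by
    intro a b ha hb X Y g
    simp only [Pi.add_apply, ha X Y g, hb X Y g]; ring
  zero_mem' := by intro X Y g; simp
  smul_mem' := by
    intro c a ha X Y g
    simp only [Pi.smul_apply, smul_eq_mul, ha X Y g]; ring

/-!
Averaging `s ↦ (Y ↦ N(Y)⁻¹ ∑_{g : X ⟶ Y} ε(g) s(X))`, where `N(Y)` counts the morphisms into `Y`,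
is a projection onto `V_𝒢(ε)`, so `dim V_𝒢(ε)` is its trace `∑_{loops g at Y} ε(g) / N(Y)`.
Conjugating `r` by the morphisms out of its base point hits every loop of its class exactly
`|Aut_{Λ𝒢}(r)|` times (orbit–stabilizer), and `ε` and `N` are constant along the class, so the
class of `r` contributes `ε(r) / |Aut_{Λ𝒢}(r)|` to the trace.
-/

namespace OneCocycle

variable {G : Type} [Groupoid.{0} G] (ε : OneCocycle G)

lemma toFun_ne_zero {X Y : G} (g : X ⟶ Y) : ε.toFun g ≠ 0 :=
  norm_ne_zero_iff.mp (by rw [ε.abs_toFun g]; exact one_ne_zero)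

lemma toFun_id (X : G) : ε.toFun (𝟙 X) = 1 :=
  (mul_eq_left₀ (ε.toFun_ne_zero (𝟙 X))).mp (by rw [← ε.cocycle, Category.comp_id])

lemma toFun_inv_mul {X Y : G} (h : X ⟶ Y) : ε.toFun (Groupoid.inv h) * ε.toFun h = 1 := by
  rw [← ε.cocycle, Groupoid.inv_comp, toFun_id]

lemma toFun_conj {X Y : G} (h : X ⟶ Y) (g : X ⟶ X) :
    ε.toFun (Groupoid.inv h ≫ g ≫ h) = ε.toFun g := by
  rw [ε.cocycle, ε.cocycle, mul_left_comm, toFun_inv_mul, mul_one]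

end OneCocycle

section Averaging

variable {G : Type} [Groupoid.{0} G] [Fintype G] [∀ X Y : G, Fintype (X ⟶ Y)]

def numHomsTo (Y : G) : ℕ := Fintype.card (Σ X : G, X ⟶ Y)

lemma numHomsTo_pos (Y : G) : 0 < numHomsTo Y :=
  Fintype.card_pos_iff.mpr ⟨⟨Y, 𝟙 Y⟩⟩

def homsToEquivOfHom {Y Y' : G} (h : Y ⟶ Y') : (Σ X : G, X ⟶ Y) ≃ (Σ X : G, X ⟶ Y') :=
  Equiv.sigmaCongrRight fun _ =>
    ⟨(· ≫ h), (· ≫ Groupoid.inv h), fun _ => by simp, fun _ => by simp⟩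

lemma numHomsTo_eq_of_hom {Y Y' : G} (h : Y ⟶ Y') : numHomsTo Y = numHomsTo Y' :=
  Fintype.card_congr (homsToEquivOfHom h)

lemma numHomsTo_eq_card_sigma_homsFrom (X : G) :
    numHomsTo X = Fintype.card (Σ Y : G, X ⟶ Y) :=
  Fintype.card_congr <| Equiv.sigmaCongrRight fun _ =>
    ⟨Groupoid.inv, Groupoid.inv, fun _ => by simp, fun _ => by simp⟩

variable (ε : OneCocycle G)

noncomputable def averageOp : (G → ℂ) →ₗ[ℂ] (G → ℂ) where
  toFun s Y := (numHomsTo Y : ℂ)⁻¹ * ∑ p : Σ X : G, X ⟶ Y, ε.toFun p.2 * s p.1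
  map_add' a b := by
    funext Y
    simp only [Pi.add_apply, mul_add, Finset.sum_add_distrib]
  map_smul' c a := by
    funext Y
    simp only [Pi.smul_apply, smul_eq_mul, RingHom.id_apply, Finset.mul_sum]
    exact Finset.sum_congr rfl fun _ _ => by ring

lemma averageOp_apply (s : G → ℂ) (Y : G) :
    averageOp ε s Y = (numHomsTo Y : ℂ)⁻¹ * ∑ p : Σ X : G, X ⟶ Y, ε.toFun p.2 * s p.1 :=
  rfl

lemma averageOp_mem_Veps (s : G → ℂ) : averageOp ε s ∈ Veps ε := by
  intro Y Y' h
  rw [averageOp_apply, averageOp_apply, numHomsTo_eq_of_hom h, mul_left_comm]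
  congr 1
  rw [Finset.mul_sum, eq_comm]
  refine Fintype.sum_equiv (homsToEquivOfHom h) _ _ fun p => ?_
  change _ = ε.toFun (p.2 ≫ h) * s p.1
  rw [ε.cocycle]
  ring

lemma averageOp_eq_self {s : G → ℂ} (hs : s ∈ Veps ε) : averageOp ε s = s := by
  funext Y
  have hterm : ∀ p : Σ X : G, X ⟶ Y, ε.toFun p.2 * s p.1 = s Y := fun p => (hs _ _ p.2).symm
  rw [averageOp_apply, Finset.sum_congr rfl fun p _ => hterm p, Finset.sum_const,
    Finset.card_univ, nsmul_eq_mul, ← numHomsTo, inv_mul_cancel_left₀]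
  exact_mod_cast (numHomsTo_pos Y).ne'

lemma averageOp_isProj : LinearMap.IsProj (Veps ε) (averageOp ε) :=
  ⟨averageOp_mem_Veps ε, fun _ => averageOp_eq_self ε⟩

lemma trace_averageOp :
    LinearMap.trace ℂ (G → ℂ) (averageOp ε) = ∑ l : Loop G, ε.toFun l.2 / numHomsTo l.1 := by
  classical
  rw [LinearMap.trace_eq_matrix_trace ℂ (Pi.basisFun ℂ G), Matrix.trace, Fintype.sum_sigma]
  refine Finset.sum_congr rfl fun Y _ => ?_
  rw [Matrix.diag_apply, LinearMap.toMatrix_apply, Pi.basisFun_repr, Pi.basisFun_apply,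
    averageOp_apply, Fintype.sum_sigma, Finset.sum_eq_single Y]
  · simp [div_eq_inv_mul, Finset.mul_sum]
  · intro X _ hX
    simp [hX]
  · simp

lemma finrank_Veps_eq_sum_loop :
    (Module.finrank ℂ (Veps ε) : ℂ) = ∑ l : Loop G, ε.toFun l.2 / numHomsTo l.1 := by
  rw [← (averageOp_isProj ε).trace, trace_averageOp]

end Averaging

section Conjugation

variable {G : Type} [Groupoid.{0} G]

def conjLoop (r : Loop G) {Y : G} (h : r.1 ⟶ Y) : Y ⟶ Y := Groupoid.inv h ≫ r.2 ≫ h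

lemma conjLoop_comp (r : Loop G) {Y Z : G} (h : r.1 ⟶ Y) (k : Y ⟶ Z) :
    conjLoop r (h ≫ k) = Groupoid.inv k ≫ conjLoop r h ≫ k := by
  simp [conjLoop, Groupoid.inv_eq_inv]

lemma conjLoop_id (r : Loop G) : conjLoop r (𝟙 r.1) = r.2 := by
  simp [conjLoop, Groupoid.inv_eq_inv]

def conjLoopFiberEquiv (r : Loop G) {Y : G} (h₀ : r.1 ⟶ Y) :
    {h : r.1 ⟶ Y // conjLoop r h = conjLoop r h₀} ≃ LoopAut r where
  toFun h := ⟨h.1 ≫ Groupoid.inv h₀, by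
    change conjLoop r _ = r.2
    rw [conjLoop_comp, h.2, ← conjLoop_comp, Groupoid.comp_inv, conjLoop_id]⟩
  invFun a := ⟨a.1 ≫ h₀, by rw [conjLoop_comp]; exact congrArg (_ ≫ · ≫ h₀) a.2⟩
  left_inv h := by simp
  right_inv a := by simp

end Conjugation

section Counting

variable {G : Type} [Groupoid.{0} G] [∀ X Y : G, Fintype (X ⟶ Y)]
  [∀ X Y : G, DecidableEq (X ⟶ Y)]

lemma card_hom_eq_card_image_conjLoop_mul (r : Loop G) (Y : G) :
    Fintype.card (r.1 ⟶ Y)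
      = (Finset.univ.image (conjLoop r (Y := Y))).card * Fintype.card (LoopAut r) := by
  rw [← Finset.card_univ, Finset.card_eq_sum_card_image (conjLoop r) Finset.univ]
  refine Finset.sum_const_nat fun g hg => ?_
  obtain ⟨h₀, -, rfl⟩ := Finset.mem_image.mp hg
  rw [← Fintype.card_subtype]
  exact Fintype.card_congr (conjLoopFiberEquiv r h₀)

variable [Fintype G]

lemma card_loopRel_mul_card_loopAut (r : Loop G) [DecidablePred (loopRel r)] :
    (Finset.univ.filter (loopRel r)).card * Fintype.card (LoopAut r) = numHomsTo r.1 := by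
  have hclass : Finset.univ.filter (loopRel r)
      = Finset.univ.sigma fun Y => Finset.univ.image (conjLoop r (Y := Y)) := by
    ext ⟨Y, g⟩
    simp [loopRel, conjLoop]
  rw [hclass, Finset.card_sigma, Finset.sum_mul, numHomsTo_eq_card_sigma_homsFrom,
    Fintype.card_sigma]
  exact Finset.sum_congr rfl fun Y _ => (card_hom_eq_card_image_conjLoop_mul r Y).symm

lemma sum_loopRel_div_numHomsTo (ε : OneCocycle G) (r : Loop G) [DecidablePred (loopRel r)] :
    ∑ l ∈ Finset.univ.filter (loopRel r), ε.toFun l.2 / numHomsTo l.1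
      = ε.toFun r.2 / Fintype.card (LoopAut r) := by
  have hconst : ∀ l ∈ Finset.univ.filter (loopRel r),
      ε.toFun l.2 / numHomsTo l.1 = ε.toFun r.2 / numHomsTo r.1 := by
    rintro ⟨Y, _⟩ hl
    obtain ⟨h, hg⟩ := (Finset.mem_filter.mp hl).2
    dsimp only at h hg
    subst hg
    rw [ε.toFun_conj, numHomsTo_eq_of_hom h]
  have hcard : ((Finset.univ.filter (loopRel r)).card : ℂ) * Fintype.card (LoopAut r)
      = numHomsTo r.1 := by
    exact_mod_cast card_loopRel_mul_card_loopAut r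
  have hM : (numHomsTo r.1 : ℂ) ≠ 0 := by exact_mod_cast (numHomsTo_pos r.1).ne'
  rw [Finset.sum_congr rfl hconst, Finset.sum_const, nsmul_eq_mul, ← hcard,
    ← mul_div_assoc, mul_div_mul_left _ _ (left_ne_zero_of_mul (hcard ▸ hM))]

end Counting

lemma sum_sum_filter_eq_sum_of_existsUnique {α β M : Type*} [Fintype α] [AddCommMonoid M]
    (R : Finset β) (rel : β → α → Prop) [∀ r, DecidablePred (rel r)]
    (hR : ∀ a, ∃! r, r ∈ R ∧ rel r a) (f : α → M) :
    ∑ r ∈ R, ∑ a ∈ Finset.univ.filter (rel r), f a = ∑ a, f a := by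
  classical
  rw [Finset.sum_comm' (t' := Finset.univ) (s' := fun a => R.filter (rel · a)) (by simp)]
  refine Finset.sum_congr rfl fun a _ => ?_
  obtain ⟨r, ⟨hrR, hra⟩, huniq⟩ := hR a
  rw [Finset.eq_singleton_iff_unique_mem.mpr ⟨Finset.mem_filter.mpr ⟨hrR, hra⟩,
    fun r' hr' => huniq r' (Finset.mem_filter.mp hr')⟩, Finset.sum_singleton]

/-- For a finite groupoid `𝒢` and a `U(1)`-valued 1-cocycle `ε`, the
groupoid integral `∑_{[g] ∈ π₀(Λ𝒢)} ε(g)/|Aut_{Λ𝒢}(g)|` of the transgressed 0-cocycle over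
the loop groupoid equals the complex dimension of `V_𝒢(ε)`.  The sum is taken over any
system `R` of representatives of the connected components of `Λ𝒢`. -/
theorem integral_loopGroupoid_eq_dim_V
    (G : Type) [Groupoid.{0} G] [Fintype G] [∀ X Y : G, Fintype (X ⟶ Y)]
    [DecidableEq G] [∀ X Y : G, DecidableEq (X ⟶ Y)]
    (ε : OneCocycle G) (R : Finset (Loop G))
    (hR : ∀ l : Loop G, ∃! r : Loop G, r ∈ R ∧ loopRel r l) :
    ∑ r ∈ R, ε.toFun r.2 / (Fintype.card (LoopAut r) : ℂ)
      = (Module.finrank ℂ (Veps ε) : ℂ) := by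
  classical
  calc ∑ r ∈ R, ε.toFun r.2 / (Fintype.card (LoopAut r) : ℂ)
      = ∑ r ∈ R, ∑ l ∈ Finset.univ.filter (loopRel r), ε.toFun l.2 / numHomsTo l.1 :=
        Finset.sum_congr rfl fun r _ => (sum_loopRel_div_numHomsTo ε r).symm
    _ = ∑ l : Loop G, ε.toFun l.2 / numHomsTo l.1 :=
        sum_sum_filter_eq_sum_of_existsUnique R loopRel hR _
    _ = Module.finrank ℂ (Veps ε) := (finrank_Veps_eq_sum_loop ε).symm
end

section
/- Let 𝒢 be a finite groupoid and β a normalized U(1)-valued 2-cocycle on 𝒢. The assignment s ↦ Σ_X Σ_{g ∈ End_𝒢(X)} conj(s(g)) |g⟩ (complex conjugate coefficients) defines a bijection from the vector space V_{Λ𝒢}(t(β)) onto the centre Z(ℂ[𝒢]^β) of the twisted groupoid algebra; in particular dim_ℂ V_{Λ𝒢}(t(β)) = dim_ℂ Z(ℂ[𝒢]^β). (Applied to 𝒢 = Λ²G and β = t²(π), this is the paper's isomorphism V_{Λ³G}(t³(π)) ≅ Z(ℂ[Λ²G]^{t²(π)}).) -/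
open CategoryTheory

structure TwoCocycle (G : Type) [Groupoid.{0} G] : Type where
  toFun : ∀ {X Y Z : G}, (X ⟶ Y) → (Y ⟶ Z) → ℂ
  abs_toFun : ∀ {X Y Z : G} (f : X ⟶ Y) (g : Y ⟶ Z), ‖toFun f g‖ = 1
  cocycle : ∀ {X Y Z W : G} (f : X ⟶ Y) (g : Y ⟶ Z) (h : Z ⟶ W),
    toFun g h * toFun f (g ≫ h) = toFun (f ≫ g) h * toFun f g
  id_left : ∀ {X Y : G} (g : X ⟶ Y), toFun (𝟙 X) g = 1
  id_right : ∀ {X Y : G} (g : X ⟶ Y), toFun g (𝟙 Y) = 1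

abbrev Mor (G : Type) [Groupoid.{0} G] : Type := Σ X Y : G, X ⟶ Y

def cnj {G : Type} [Groupoid.{0} G] {X Y : G} (g : X ⟶ X) (h : X ⟶ Y) : Y ⟶ Y :=
  Groupoid.inv h ≫ g ≫ h

noncomputable def bv {G : Type} [Groupoid.{0} G] [DecidableEq G]
    [∀ X Y : G, DecidableEq (X ⟶ Y)] (f : Mor G) : Mor G → ℂ :=
  fun m => if m = f then 1 else 0

noncomputable def mulFun {G : Type} [Groupoid.{0} G] [Fintype G]
    [∀ X Y : G, Fintype (X ⟶ Y)] [∀ X Y : G, DecidableEq (X ⟶ Y)]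
    (β : TwoCocycle G) (x y : Mor G → ℂ) : Mor G → ℂ :=
  fun m => ∑ Y : G, ∑ f : m.1 ⟶ Y, ∑ g : Y ⟶ m.2.1,
    (if f ≫ g = m.2.2 then β.toFun f g else 0) * x ⟨m.1, Y, f⟩ * y ⟨Y, m.2.1, g⟩

set_option linter.unusedSectionVars false

section

variable {G : Type} [Groupoid.{0} G] [Fintype G]
    [∀ X Y : G, Fintype (X ⟶ Y)] [DecidableEq G] [∀ X Y : G, DecidableEq (X ⟶ Y)]

theorem mulFun_add_left (β : TwoCocycle G) (a b x : Mor G → ℂ) :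
    mulFun β (a + b) x = mulFun β a x + mulFun β b x := by
  funext m; simp [mulFun, mul_add, add_mul, Finset.sum_add_distrib]

theorem mulFun_add_right (β : TwoCocycle G) (a x y : Mor G → ℂ) :
    mulFun β a (x + y) = mulFun β a x + mulFun β a y := by
  funext m; simp [mulFun, mul_add, add_mul, Finset.sum_add_distrib]

theorem mulFun_smul_left (β : TwoCocycle G) (c : ℂ) (a x : Mor G → ℂ) :
    mulFun β (c • a) x = c • mulFun β a x := by
  funext m
  simp [mulFun, Finset.mul_sum]
  congr 1; funext Y; congr 1; funext f; congr 1; funext g; ring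

theorem mulFun_smul_right (β : TwoCocycle G) (c : ℂ) (a x : Mor G → ℂ) :
    mulFun β a (c • x) = c • mulFun β a x := by
  funext m
  simp [mulFun, Finset.mul_sum]
  congr 1; funext Y; congr 1; funext f; congr 1; funext g; ring

theorem mulFun_zero_left (β : TwoCocycle G) (x : Mor G → ℂ) : mulFun β 0 x = 0 := by
  funext m; simp [mulFun]

theorem mulFun_zero_right (β : TwoCocycle G) (x : Mor G → ℂ) : mulFun β x 0 = 0 := by
  funext m; simp [mulFun]

/-- The centre `Z(ℂ[𝒢]^β)` of the twisted groupoid algebra, as a `ℂ`-subspace of the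
algebra (identified with the space of `ℂ`-valued functions on morphisms). -/
noncomputable def centreSub (β : TwoCocycle G) : Submodule ℂ (Mor G → ℂ) where
  carrier := {z | ∀ x : Mor G → ℂ, mulFun β z x = mulFun β x z}
  add_mem' := by
    intro a b ha hb x
    rw [mulFun_add_left, mulFun_add_right, ha x, hb x]
  zero_mem' := by
    intro x
    rw [mulFun_zero_left, mulFun_zero_right]
  smul_mem' := by
    intro c a ha x
    rw [mulFun_smul_left, mulFun_smul_right, ha x]

/-- The `S¹`-transgression of the 2-cocycle `β`, a 1-cocycle on the loop groupoid `Λ𝒢`,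
evaluated on the morphism `(g → h)` of `Λ𝒢`. -/
noncomputable def tBeta (β : TwoCocycle G) {X Y : G} (g : X ⟶ X) (h : X ⟶ Y) : ℂ :=
  β.toFun h (cnj g h) * (β.toFun g h)⁻¹

/-- The vector space `V_{Λ𝒢}(t(β))` of functions on the loops of `𝒢` satisfying
`s(h⁻¹gh) = t(β)(g → h) · s(g)`. -/
noncomputable def VLoop (β : TwoCocycle G) : Submodule ℂ (Loop G → ℂ) where
  carrier := {s | ∀ (X Y : G) (g : X ⟶ X) (h : X ⟶ Y),
    s ⟨Y, cnj g h⟩ = tBeta β g h * s ⟨X, g⟩}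
  add_mem' := by
    intro a b ha hb X Y g h
    simp only [Pi.add_apply, ha X Y g h, hb X Y g h]; ring
  zero_mem' := by intro X Y g h; simp
  smul_mem' := by
    intro c a ha X Y g h
    simp only [Pi.smul_apply, smul_eq_mul, ha X Y g h]; ring

/-- The map `s ↦ ∑_X ∑_{g ∈ End(X)} conj(s(g)) |g⟩` from functions on loops to elements
of the twisted groupoid algebra. -/
noncomputable def centreMap (s : Loop G → ℂ) : Mor G → ℂ :=
  ∑ X : G, ∑ g : X ⟶ X, (starRingEnd ℂ) (s ⟨X, g⟩) • bv (⟨X, X, g⟩ : Mor G)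

end

/-!
An element `z` of `ℂ[𝒢]^β` is central iff it commutes with every basis vector `|h⟩`.
Commuting with the identities `|𝟙 B⟩` forces `z` to vanish off the loops, and comparing the
coefficients of `|g ≫ h⟩` in `z ⋆ |h⟩` and `|h⟩ ⋆ z` gives
`β(g, h) z(g) = β(h, h⁻¹gh) z(h⁻¹gh)` for every loop `g`. Conversely, these relations already
make `z` central: conjugation by `k` matches the terms of `z ⋆ x` and `x ⋆ z` at `k`, the
coefficients agreeing by the cocycle identity for `(f, f⁻¹k, k⁻¹fk)`. Since `|β| = 1`, taking
complex conjugates turns these relations into the defining relations of `V_{Λ𝒢}(t(β))`, so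
`centreMap` is a conjugate-linear isomorphism with inverse `z ↦ conj (z|loops)`.
-/

namespace TwoCocycle

variable {G : Type} [Groupoid.{0} G] (β : TwoCocycle G)

theorem toFun_ne_zero {X Y Z : G} (f : X ⟶ Y) (g : Y ⟶ Z) : β.toFun f g ≠ 0 :=
  norm_ne_zero_iff.mp (by rw [β.abs_toFun]; exact one_ne_zero)

theorem star_toFun {X Y Z : G} (f : X ⟶ Y) (g : Y ⟶ Z) :
    star (β.toFun f g) = (β.toFun f g)⁻¹ := by
  rw [Complex.inv_def, Complex.normSq_eq_norm_sq, β.abs_toFun]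
  simp

theorem cocycle_cnj {X Y : G} (f : X ⟶ X) (k : X ⟶ Y) :
    β.toFun (inv f ≫ k) (cnj f k) * β.toFun f k =
      β.toFun k (cnj f k) * β.toFun f (inv f ≫ k) := by
  simpa [cnj, Groupoid.inv_eq_inv] using β.cocycle f (inv f ≫ k) (cnj f k)

end TwoCocycle

section LoopFunctions

variable {G : Type} [Groupoid.{0} G]

def IsLoopSupported (z : Mor G → ℂ) : Prop :=
  ∀ ⦃A B : G⦄ (k : A ⟶ B), A ≠ B → z ⟨A, B, k⟩ = 0

def loopRestrict (z : Mor G → ℂ) : Loop G → ℂ := fun l => z ⟨l.1, l.1, l.2⟩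

def IsTwistedInvariant (β : TwoCocycle G) (w : Loop G → ℂ) : Prop :=
  ∀ (X Y : G) (g : X ⟶ X) (h : X ⟶ Y),
    β.toFun g h * w ⟨X, g⟩ = β.toFun h (cnj g h) * w ⟨Y, cnj g h⟩

theorem IsTwistedInvariant.mul_apply_cnj {β : TwoCocycle G} {w : Loop G → ℂ}
    (hw : IsTwistedInvariant β w) {A B : G} (f : A ⟶ A) (k : A ⟶ B) :
    β.toFun f (inv f ≫ k) * w ⟨A, f⟩ = β.toFun (inv f ≫ k) (cnj f k) * w ⟨B, cnj f k⟩ := by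
  refine mul_left_cancel₀ (β.toFun_ne_zero k (cnj f k)) ?_
  linear_combination -w ⟨A, f⟩ * β.cocycle_cnj f k + β.toFun (inv f ≫ k) (cnj f k) * hw A B f k

theorem mem_VLoop_iff {β : TwoCocycle G} {s : Loop G → ℂ} : s ∈ VLoop β ↔ IsTwistedInvariant β (star s) := by
  refine forall₄_congr fun X Y g h => ?_
  rw [← star_inj, star_mul', tBeta, star_mul', star_inv₀, β.star_toFun, β.star_toFun, inv_inv,
    Pi.star_apply, Pi.star_apply, mul_assoc, eq_inv_mul_iff_mul_eq₀ (β.toFun_ne_zero _ _),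
    eq_comm]

end LoopFunctions

section Convolution

variable {G : Type} [Groupoid.{0} G] [Fintype G] [∀ X Y : G, Fintype (X ⟶ Y)]
  [∀ X Y : G, DecidableEq (X ⟶ Y)] (β : TwoCocycle G)

theorem mulFun_apply_eq_sum_left (x y : Mor G → ℂ) {A B : G} (k : A ⟶ B) :
    mulFun β x y ⟨A, B, k⟩ =
      ∑ Y : G, ∑ f : A ⟶ Y, β.toFun f (inv f ≫ k) * x ⟨A, Y, f⟩ * y ⟨Y, B, inv f ≫ k⟩ := by
  refine Fintype.sum_congr _ _ fun Y => Fintype.sum_congr _ _ fun f => ?_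
  simp only [ite_mul, zero_mul, ← IsIso.eq_inv_comp, Fintype.sum_ite_eq']

theorem mulFun_apply_eq_sum_right (x y : Mor G → ℂ) {A B : G} (k : A ⟶ B) :
    mulFun β x y ⟨A, B, k⟩ =
      ∑ Y : G, ∑ g : Y ⟶ B, β.toFun (k ≫ inv g) g * x ⟨A, Y, k ≫ inv g⟩ * y ⟨Y, B, g⟩ := by
  refine Fintype.sum_congr _ _ fun Y => ?_
  rw [Finset.sum_comm]
  refine Fintype.sum_congr _ _ fun g => ?_
  simp only [ite_mul, zero_mul, ← IsIso.eq_comp_inv, Fintype.sum_ite_eq']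

theorem mulFun_apply_of_isLoopSupported_left {x : Mor G → ℂ} (hx : IsLoopSupported x)
    (y : Mor G → ℂ) {A B : G} (k : A ⟶ B) :
    mulFun β x y ⟨A, B, k⟩ =
      ∑ f : A ⟶ A, β.toFun f (inv f ≫ k) * loopRestrict x ⟨A, f⟩ * y ⟨A, B, inv f ≫ k⟩ := by
  rw [mulFun_apply_eq_sum_left, Fintype.sum_eq_single A fun Y hY =>
    Fintype.sum_eq_zero _ fun f => by rw [hx f hY.symm, mul_zero, zero_mul]]
  rfl

theorem mulFun_apply_of_isLoopSupported_right (x : Mor G → ℂ) {y : Mor G → ℂ}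
    (hy : IsLoopSupported y) {A B : G} (k : A ⟶ B) :
    mulFun β x y ⟨A, B, k⟩ =
      ∑ g : B ⟶ B, β.toFun (k ≫ inv g) g * x ⟨A, B, k ≫ inv g⟩ * loopRestrict y ⟨B, g⟩ := by
  rw [mulFun_apply_eq_sum_right, Fintype.sum_eq_single B fun Y hY =>
    Fintype.sum_eq_zero _ fun g => by rw [hy g hY, mul_zero]]
  rfl

end Convolution

section Basis

variable {G : Type} [Groupoid.{0} G] [DecidableEq G] [∀ X Y : G, DecidableEq (X ⟶ Y)]

theorem bv_apply_of_ne_fst {X Y A B : G} (f₀ : X ⟶ Y) (f : A ⟶ B) (h : A ≠ X) :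
    bv (⟨X, Y, f₀⟩ : Mor G) ⟨A, B, f⟩ = 0 :=
  if_neg fun e => h (congrArg Sigma.fst e)

theorem bv_apply_of_ne_snd {X Y A B : G} (f₀ : X ⟶ Y) (f : A ⟶ B) (h : B ≠ Y) :
    bv (⟨X, Y, f₀⟩ : Mor G) ⟨A, B, f⟩ = 0 :=
  if_neg fun e => h (congrArg (fun m : Mor G => m.2.1) e)

theorem bv_apply_same {X Y : G} (f₀ f : X ⟶ Y) :
    bv (⟨X, Y, f₀⟩ : Mor G) ⟨X, Y, f⟩ = if f = f₀ then 1 else 0 := by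
  simp [bv]

end Basis

section Centre

variable {G : Type} [Groupoid.{0} G] [Fintype G] [∀ X Y : G, Fintype (X ⟶ Y)]
  [DecidableEq G] [∀ X Y : G, DecidableEq (X ⟶ Y)] (β : TwoCocycle G)

theorem mulFun_bv_apply (z : Mor G → ℂ) {A B Y : G} (k : A ⟶ B) (h : Y ⟶ B) :
    mulFun β z (bv ⟨Y, B, h⟩) ⟨A, B, k⟩ = β.toFun (k ≫ inv h) h * z ⟨A, Y, k ≫ inv h⟩ := by
  rw [mulFun_apply_eq_sum_right, Fintype.sum_eq_single Y fun Y' hY' =>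
    Fintype.sum_eq_zero _ fun g => by rw [bv_apply_of_ne_fst _ _ hY', mul_zero]]
  simp [bv_apply_same]

theorem bv_mulFun_apply (z : Mor G → ℂ) {A B Y : G} (k : A ⟶ B) (f : A ⟶ Y) :
    mulFun β (bv ⟨A, Y, f⟩) z ⟨A, B, k⟩ = β.toFun f (inv f ≫ k) * z ⟨Y, B, inv f ≫ k⟩ := by
  rw [mulFun_apply_eq_sum_left, Fintype.sum_eq_single Y fun Y' hY' =>
    Fintype.sum_eq_zero _ fun g => by rw [bv_apply_of_ne_snd _ _ hY', mul_zero, zero_mul]]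
  simp [bv_apply_same]

theorem bv_mulFun_apply_of_ne (z : Mor G → ℂ) {A B X Y : G} (k : A ⟶ B) (f : X ⟶ Y)
    (h : A ≠ X) : mulFun β (bv ⟨X, Y, f⟩) z ⟨A, B, k⟩ = 0 := by
  rw [mulFun_apply_eq_sum_left]
  exact Fintype.sum_eq_zero _ fun Y' => Fintype.sum_eq_zero _ fun g => by
    rw [bv_apply_of_ne_fst _ _ h, mul_zero, zero_mul]

theorem IsLoopSupported.of_mem_centreSub {z : Mor G → ℂ} (hz : z ∈ centreSub β) :
    IsLoopSupported z := by
  intro A B k hAB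
  have h := congrFun (hz (bv ⟨B, B, 𝟙 B⟩)) ⟨A, B, k⟩
  rwa [mulFun_bv_apply, bv_mulFun_apply_of_ne β z k _ hAB, IsIso.inv_id, Category.comp_id,
    β.id_right, one_mul] at h

theorem IsTwistedInvariant.of_mem_centreSub {z : Mor G → ℂ} (hz : z ∈ centreSub β) :
    IsTwistedInvariant β (loopRestrict z) := by
  intro X Y g h
  have hc := congrFun (hz (bv ⟨X, Y, h⟩)) ⟨X, Y, g ≫ h⟩
  rw [mulFun_bv_apply, bv_mulFun_apply] at hc
  simpa [loopRestrict, cnj, Groupoid.inv_eq_inv] using hc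

theorem mem_centreSub_of_isTwistedInvariant {z : Mor G → ℂ} (hz : IsLoopSupported z)
    (hw : IsTwistedInvariant β (loopRestrict z)) : z ∈ centreSub β := by
  intro x
  funext ⟨A, B, k⟩
  rw [mulFun_apply_of_isLoopSupported_left β hz, mulFun_apply_of_isLoopSupported_right β x hz]
  refine Fintype.sum_equiv ((asIso k).homCongr (asIso k)) _ _ fun f => ?_
  have hc : inv k ≫ f ≫ k = cnj f k := by rw [cnj, Groupoid.inv_eq_inv]
  have hk : k ≫ inv (cnj f k) = inv f ≫ k := by simp [← hc]
  simp only [Iso.homCongr_apply, asIso_inv, asIso_hom, hc, hk]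
  rw [hw.mul_apply_cnj, mul_right_comm]

theorem mem_centreSub_iff {z : Mor G → ℂ} :
    z ∈ centreSub β ↔ IsLoopSupported z ∧ IsTwistedInvariant β (loopRestrict z) :=
  ⟨fun hz => ⟨.of_mem_centreSub β hz, .of_mem_centreSub β hz⟩,
    fun hz => mem_centreSub_of_isTwistedInvariant β hz.1 hz.2⟩

theorem centreMap_apply_loop (s : Loop G → ℂ) {A : G} (k : A ⟶ A) :
    centreMap s ⟨A, A, k⟩ = star (s ⟨A, k⟩) := by
  simp only [centreMap, Finset.sum_apply, Pi.smul_apply, smul_eq_mul]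
  rw [Fintype.sum_eq_single A fun X hX =>
    Fintype.sum_eq_zero _ fun g => by rw [bv_apply_of_ne_fst _ _ hX.symm, mul_zero]]
  simp [bv_apply_same]

theorem isLoopSupported_centreMap (s : Loop G → ℂ) : IsLoopSupported (centreMap s) := by
  intro A B k hAB
  simp only [centreMap, Finset.sum_apply, Pi.smul_apply, smul_eq_mul]
  refine Fintype.sum_eq_zero _ fun X => Fintype.sum_eq_zero _ fun g => ?_
  obtain rfl | hX := eq_or_ne A X
  · rw [bv_apply_of_ne_snd _ _ hAB.symm, mul_zero]
  · rw [bv_apply_of_ne_fst _ _ hX, mul_zero]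

theorem loopRestrict_centreMap (s : Loop G → ℂ) : loopRestrict (centreMap s) = star s :=
  funext fun l => centreMap_apply_loop s l.2

theorem centreMap_star_loopRestrict {z : Mor G → ℂ} (hz : IsLoopSupported z) :
    centreMap (star (loopRestrict z)) = z := by
  funext ⟨A, B, k⟩
  obtain rfl | hAB := eq_or_ne A B
  · rw [centreMap_apply_loop, Pi.star_apply, star_star]
    rfl
  · rw [isLoopSupported_centreMap _ k hAB, hz k hAB]

theorem centreMap_mem_centreSub_iff {s : Loop G → ℂ} :
    centreMap s ∈ centreSub β ↔ s ∈ VLoop β := by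
  rw [mem_centreSub_iff, loopRestrict_centreMap, mem_VLoop_iff,
    and_iff_right (isLoopSupported_centreMap s)]

theorem centreMap_add (s t : Loop G → ℂ) : centreMap (s + t) = centreMap s + centreMap t := by
  simp only [centreMap, Pi.add_apply, map_add, add_smul, Finset.sum_add_distrib]

theorem centreMap_smul (c : ℂ) (s : Loop G → ℂ) :
    centreMap (c • s) = starRingEnd ℂ c • centreMap s := by
  simp only [centreMap, Pi.smul_apply, smul_eq_mul, map_mul, Finset.smul_sum, smul_smul]

noncomputable def centreMapₛₗ : (Loop G → ℂ) →ₛₗ[starRingEnd ℂ] (Mor G → ℂ) where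
  toFun := centreMap
  map_add' := centreMap_add
  map_smul' := centreMap_smul

end Centre

theorem LinearEquiv.finrank_eq_of_semilinear {R M N : Type*} [Semiring R]
    [AddCommMonoid M] [AddCommMonoid N] [Module R M] [Module R N] {σ σ' : R →+* R}
    [RingHomInvPair σ σ'] [RingHomInvPair σ' σ] (e : M ≃ₛₗ[σ] N) :
    Module.finrank R M = Module.finrank R N := by
  have hσ : Function.Bijective σ := Function.bijective_iff_has_inverse.mpr
    ⟨σ', fun _ => RingHomInvPair.comp_apply_eq, fun _ => RingHomInvPair.comp_apply_eq₂⟩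
  have h := congrArg Cardinal.toNat <|
    lift_rank_eq_of_equiv_equiv σ e.toAddEquiv hσ fun c x => map_smulₛₗ e c x
  rwa [Cardinal.toNat_lift, Cardinal.toNat_lift] at h

/-- `s ↦ ∑ conj(s(g)) |g⟩` is a bijection from `V_{Λ𝒢}(t(β))` onto the
centre `Z(ℂ[𝒢]^β)`; in particular the two spaces have the same complex dimension. -/
theorem centreMap_bijOn_and_dim
    (G : Type) [Groupoid.{0} G] [Fintype G] [∀ X Y : G, Fintype (X ⟶ Y)]
    [DecidableEq G] [∀ X Y : G, DecidableEq (X ⟶ Y)] (β : TwoCocycle G) :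
    Set.BijOn centreMap (VLoop β : Set (Loop G → ℂ)) (centreSub β : Set (Mor G → ℂ)) ∧
    Module.finrank ℂ (VLoop β) = Module.finrank ℂ (centreSub β) := by
  have hinv : Set.InvOn (fun z => star (loopRestrict z)) centreMap
      (VLoop β : Set (Loop G → ℂ)) (centreSub β : Set (Mor G → ℂ)) :=
    ⟨fun s _ => by simp only [loopRestrict_centreMap, star_star],
      fun z hz => centreMap_star_loopRestrict (.of_mem_centreSub β hz)⟩
  have hbij := hinv.bijOn (fun s => (centreMap_mem_centreSub_iff β).mpr) fun z hz => by
    rw [SetLike.mem_coe, ← centreMap_mem_centreSub_iff β,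
      centreMap_star_loopRestrict (.of_mem_centreSub β hz)]
    exact hz
  exact ⟨hbij, LinearEquiv.finrank_eq_of_semilinear
    (LinearEquiv.ofBijective (centreMapₛₗ.restrict hbij.mapsTo) hbij.bijective)⟩
end

section
/- Let G be a finite group and π a normalized U(1)-valued 4-cocycle on G. Then the transgression t(π), defined on composable triples of morphisms of the loop groupoid ΛG by t(π)(a → b, a^b → c, a^{bc} → d) := π(b, a^b, c, d) · π(b, c, d, a^{bcd}) · π(a,b,c,d)⁻¹ · π(b, c, a^{bc}, d)⁻¹ (where x^y := y⁻¹xy), is a normalized groupoid 3-cocycle on ΛG: for all a, b, c, d, e ∈ G, t(π)(a^b → c, a^{bc} → d, a^{bcd} → e) · t(π)(a → b, a^b → cd, a^{bcd} → e) · t(π)(a → b, a^b → c, a^{bc} → d) = t(π)(a → bc, a^{bc} → d, a^{bcd} → e) · t(π)(a → b, a^b → c, a^{bc} → de), and t(π)(a → b, a^b → c, a^{bc} → d) = 1 whenever any of b, c, d equals the identity of G. -/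
/-- A normalized `U(1)`-valued 4-cocycle on a group `G`. -/
structure FourCocycle (G : Type) [Group G] : Type where
  toFun : G → G → G → G → ℂ
  abs_toFun : ∀ a b c d : G, ‖toFun a b c d‖ = 1
  cocycle : ∀ g₁ g₂ g₃ g₄ g₅ : G,
    toFun g₂ g₃ g₄ g₅ * toFun g₁ (g₂ * g₃) g₄ g₅ * toFun g₁ g₂ g₃ (g₄ * g₅)
      = toFun (g₁ * g₂) g₃ g₄ g₅ * toFun g₁ g₂ (g₃ * g₄) g₅ * toFun g₁ g₂ g₃ g₄
  normalized : ∀ a b c d : G, a = 1 ∨ b = 1 ∨ c = 1 ∨ d = 1 → toFun a b c d = 1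

/-- Conjugation `x^y = y⁻¹ x y` in a group. -/
def cj {G : Type} [Group G] (x y : G) : G := y⁻¹ * x * y

/-- The transgression `t(π)` of a 4-cocycle `π` on `G`, a 3-cocycle on the loop groupoid
`ΛG`, evaluated on the composable triple `(a → b, a^b → c, a^{bc} → d)`:
`t(π) = π(b, a^b, c, d) π(b, c, d, a^{bcd}) π(a,b,c,d)⁻¹ π(b, c, a^{bc}, d)⁻¹`. -/
noncomputable def tpi {G : Type} [Group G] (π : FourCocycle G) (a b c d : G) : ℂ :=
  π.toFun b (cj a b) c d * π.toFun b c d (cj a (b * c * d)) *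
    (π.toFun a b c d)⁻¹ * (π.toFun b c (cj a (b * c)) d)⁻¹

/-!
The transgression commutes with the coboundaries up to sign: for every 4-cochain `f` on `G`,
the loop-groupoid coboundary of `t(f)` at `(a → b, a^b → c, a^{bc} → d, a^{bcd} → e)` is the
alternating product of `δf` at the five points `(a,b,c,d,e)`, `(b,a^b,c,d,e)`, `(b,c,a^{bc},d,e)`,
`(b,c,d,a^{bcd},e)` and `(b,c,d,e,a^{bcde})`. Hence `t(f)` is a cocycle whenever `f` is one.
This identity is formal in the coefficient group, so it is proved for any commutative group and
applied to `π` viewed as a `Circle`-valued cochain.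
-/

section Conjugation

variable {G : Type} [Group G]

theorem cj_cj (a b c : G) : cj (cj a b) c = cj a (b * c) := by
  simp only [cj, mul_inv_rev, mul_assoc]

theorem mul_cj (a b : G) : b * cj a b = a * b := by
  simp [cj, mul_assoc]

theorem mul_cj_mul (a b c : G) : c * cj a (b * c) = cj a b * c := by
  simp [cj, mul_assoc]

end Conjugation

section Transgression

variable {G M : Type} [Group G] [CommGroup M]

def groupCoboundary₄ (f : G → G → G → G → M) (g₁ g₂ g₃ g₄ g₅ : G) : M :=
  f g₂ g₃ g₄ g₅ * f g₁ (g₂ * g₃) g₄ g₅ * f g₁ g₂ g₃ (g₄ * g₅) /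
    (f (g₁ * g₂) g₃ g₄ g₅ * f g₁ g₂ (g₃ * g₄) g₅ * f g₁ g₂ g₃ g₄)

/-- The transgression of a 4-cochain; `transgression f a b c d` is its value on the composable
triple `(a → b, a^b → c, a^{bc} → d)` of `ΛG`. -/
def transgression (f : G → G → G → G → M) (a b c d : G) : M :=
  f b (cj a b) c d * f b c d (cj a (b * c * d)) / (f a b c d * f b c (cj a (b * c)) d)

/-- The coboundary of a 3-cochain `t` on `ΛG`, encoded as `t a b c d` for the triple
`(a → b, a^b → c, a^{bc} → d)`, at the composable quadruple starting at `a`. -/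
def loopCoboundary₃ (t : G → G → G → G → M) (a b c d e : G) : M :=
  t (cj a b) c d e * t a b (c * d) e * t a b c d / (t a (b * c) d e * t a b c (d * e))

theorem loopCoboundary₃_transgression (f : G → G → G → G → M) (a b c d e : G) :
    loopCoboundary₃ (transgression f) a b c d e =
      groupCoboundary₄ f a b c d e / groupCoboundary₄ f b (cj a b) c d e *
        groupCoboundary₄ f b c (cj a (b * c)) d e / groupCoboundary₄ f b c d (cj a (b * c * d)) e *
          groupCoboundary₄ f b c d e (cj a (b * c * d * e)) := by
  simp only [loopCoboundary₃, transgression, groupCoboundary₄, cj_cj, ← mul_assoc, mul_cj,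
    mul_cj_mul]
  apply Additive.ofMul.injective
  simp only [ofMul_mul, ofMul_div]
  abel

theorem loopCoboundary₃_transgression_eq_one {f : G → G → G → G → M}
    (hf : ∀ g₁ g₂ g₃ g₄ g₅ : G, groupCoboundary₄ f g₁ g₂ g₃ g₄ g₅ = 1) (a b c d e : G) :
    loopCoboundary₃ (transgression f) a b c d e = 1 := by
  simp [loopCoboundary₃_transgression, hf]

theorem transgression_eq_one {f : G → G → G → G → M}
    (hf : ∀ a b c d : G, a = 1 ∨ b = 1 ∨ c = 1 ∨ d = 1 → f a b c d = 1) {a b c d : G}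
    (h : b = 1 ∨ c = 1 ∨ d = 1) : transgression f a b c d = 1 := by
  rcases h with rfl | rfl | rfl <;> simp [transgression, hf]

end Transgression

namespace FourCocycle

variable {G : Type} [Group G] (π : FourCocycle G)

def toCircle (a b c d : G) : Circle :=
  ⟨π.toFun a b c d, mem_sphere_zero_iff_norm.2 (π.abs_toFun a b c d)⟩

@[simp]
theorem coe_toCircle (a b c d : G) : (π.toCircle a b c d : ℂ) = π.toFun a b c d :=
  rfl

theorem groupCoboundary₄_toCircle (g₁ g₂ g₃ g₄ g₅ : G) :
    groupCoboundary₄ π.toCircle g₁ g₂ g₃ g₄ g₅ = 1 := by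
  rw [groupCoboundary₄, div_eq_one]
  ext
  simpa using π.cocycle g₁ g₂ g₃ g₄ g₅

theorem toCircle_eq_one {a b c d : G} (h : a = 1 ∨ b = 1 ∨ c = 1 ∨ d = 1) :
    π.toCircle a b c d = 1 :=
  Circle.ext (π.normalized a b c d h)

theorem coe_transgression_toCircle (a b c d : G) :
    ((transgression π.toCircle a b c d : Circle) : ℂ) = tpi π a b c d := by
  simp only [transgression, tpi, Circle.coe_div, Circle.coe_mul, coe_toCircle]
  ring

end FourCocycle

theorem tpi_threeCocycle_general
    (G : Type) [Group G] (π : FourCocycle G) :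
    (∀ a b c d e : G,
      tpi π (cj a b) c d e * tpi π a b (c * d) e * tpi π a b c d
        = tpi π a (b * c) d e * tpi π a b c (d * e)) ∧
    (∀ a b c d : G, b = 1 ∨ c = 1 ∨ d = 1 → tpi π a b c d = 1) := by
  simp only [← π.coe_transgression_toCircle, ← Circle.coe_mul, Circle.coe_inj, Circle.coe_eq_one]
  refine ⟨fun a b c d e => ?_, fun a b c d h => ?_⟩
  · rw [← div_eq_one]
    exact loopCoboundary₃_transgression_eq_one π.groupCoboundary₄_toCircle a b c d e
  · exact transgression_eq_one (fun _ _ _ _ => π.toCircle_eq_one) h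

/-- For a finite group `G` with normalized 4-cocycle `π`, the
transgression `t(π)` is a normalized groupoid 3-cocycle on the loop groupoid `ΛG`. -/
theorem tpi_threeCocycle
    (G : Type) [Group G] [Fintype G] (π : FourCocycle G) :
    (∀ a b c d e : G,
      tpi π (cj a b) c d e * tpi π a b (c * d) e * tpi π a b c d
        = tpi π a (b * c) d e * tpi π a b c (d * e)) ∧
    (∀ a b c d : G, b = 1 ∨ c = 1 ∨ d = 1 → tpi π a b c d = 1) :=
  tpi_threeCocycle_general G π
end

section
/- Let 𝒢 be a finite groupoid and β a normalized U(1)-valued 2-cocycle on 𝒢. Then the twisted groupoid algebra ℂ[𝒢]^β is a semisimple ring: every left ℂ[𝒢]^β-module is a direct sum of simple modules. -/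
open CategoryTheory

/-- A realization of the twisted groupoid algebra `ℂ[𝒢]^β`: a unital associative
`ℂ`-algebra with a basis `{|g⟩}` indexed by the morphisms of `𝒢`, whose product is the
`β`-twisted convolution and whose unit is `∑_X |id_X⟩`. -/
structure TwistedGroupoidAlgebra (G : Type) [Groupoid.{0} G] [Fintype G]
    [∀ X Y : G, Fintype (X ⟶ Y)] (β : TwoCocycle G) : Type 1 where
  carrier : Type
  [ring : Ring carrier]
  [alg : Algebra ℂ carrier]
  basis : Module.Basis (Mor G) ℂ carrier
  mul_basis_comp : ∀ {X Y Z : G} (f : X ⟶ Y) (g : Y ⟶ Z),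
    basis ⟨X, Y, f⟩ * basis ⟨Y, Z, g⟩ = β.toFun f g • basis ⟨X, Z, f ≫ g⟩
  mul_basis_ncomp : ∀ f g : Mor G, f.2.1 ≠ g.1 → basis f * basis g = 0
  one_eq : (1 : carrier) = ∑ X : G, basis ⟨X, X, 𝟙 X⟩

namespace TwistedGroupoidAlgebra

variable {G : Type} [Groupoid.{0} G] [Fintype G] [∀ X Y : G, Fintype (X ⟶ Y)]
    {β : TwoCocycle G}

instance (A : TwistedGroupoidAlgebra G β) : Ring A.carrier := A.ring
instance (A : TwistedGroupoidAlgebra G β) : Algebra ℂ A.carrier := A.alg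

end TwistedGroupoidAlgebra

/-!
Identify `ℂ[𝒢]^β` with `ℂ^{Mor 𝒢}` so that the basis `|g⟩` becomes orthonormal. Because `β`
takes values of modulus one, the cocycle identity shows that the adjoint of left multiplication
by `|h⟩` is left multiplication by `conj β(h⁻¹, h) • |h⁻¹⟩`. Hence the orthogonal complement of a
left ideal is again a left ideal, so every left ideal has a complement.
-/

open scoped InnerProductSpace ComplexConjugate

section UnitaryTrick

variable {𝕜 A M E : Type*} [RCLike 𝕜] [Ring A] [Algebra 𝕜 A] [AddCommGroup M] [Module A M]
  [Module 𝕜 M] [IsScalarTower 𝕜 A M] [NormedAddCommGroup E] [InnerProductSpace 𝕜 E]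

theorem isSemisimpleModule_of_exists_adjoint [FiniteDimensional 𝕜 E] (e : M ≃ₗ[𝕜] E)
    {s : Set A} (hs : Submodule.span 𝕜 s = ⊤)
    (hadj : ∀ a ∈ s, ∃ a' : A, ∀ x y : M, ⟪e x, e (a • y)⟫_𝕜 = ⟪e (a' • x), e y⟫_𝕜) :
    IsSemisimpleModule A M where
  exists_isCompl p := by
    let P : Submodule A M :=
      { carrier := {z | ∀ u ∈ p, ⟪e u, e z⟫_𝕜 = 0}
        add_mem' := fun hz hz' u hu => by simp [inner_add_right, hz u hu, hz' u hu]
        zero_mem' := fun u _ => by simp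
        smul_mem' := fun a z hz u hu => by
          induction (hs ▸ Submodule.mem_top : a ∈ Submodule.span 𝕜 s) using
            Submodule.span_induction generalizing u with
          | mem a ha =>
            obtain ⟨a', ha'⟩ := hadj a ha
            exact (ha' u z).trans (hz _ (p.smul_mem a' hu))
          | zero => simp
          | add a b _ _ ha hb => simp [add_smul, inner_add_right, ha u hu, hb u hu]
          | smul r a _ ha => simp [smul_assoc, inner_smul_right, ha u hu] }
    refine ⟨P, Submodule.disjoint_def.mpr fun x hxp hxP => ?_, codisjoint_iff_le_sup.mpr ?_⟩
    · simpa using hxP x hxp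
    · intro x _
      let q := (p.restrictScalars 𝕜).map (e : M →ₗ[𝕜] E)
      obtain ⟨_, ⟨u, hu, rfl⟩, w, hw, hxw⟩ := q.exists_add_mem_mem_orthogonal (e x)
      refine Submodule.mem_sup.mpr ⟨u, hu, e.symm w, fun u' hu' => ?_, e.injective ?_⟩
      · simpa using hw _ ⟨u', hu', rfl⟩
      · simpa using hxw.symm

end UnitaryTrick

namespace TwoCocycle

variable {G : Type} [Groupoid.{0} G] (β : TwoCocycle G)

theorem mul_conj_toFun {X Y Z : G} (f : X ⟶ Y) (g : Y ⟶ Z) :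
    β.toFun f g * conj (β.toFun f g) = 1 := by
  rw [RCLike.mul_conj, β.abs_toFun]
  norm_num

theorem toFun_inv_comp {X Y Z : G} (h : X ⟶ Y) (f : Y ⟶ Z) :
    β.toFun (Groupoid.inv h) (h ≫ f) = β.toFun (Groupoid.inv h) h * conj (β.toFun h f) := by
  have hcocycle := β.cocycle (Groupoid.inv h) h f
  rw [Groupoid.inv_comp, β.id_left, one_mul] at hcocycle
  rw [← hcocycle, mul_comm (β.toFun h f), mul_assoc, β.mul_conj_toFun, mul_one]

end TwoCocycle

namespace TwistedGroupoidAlgebra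

variable {G : Type} [Groupoid.{0} G] [Fintype G] [∀ X Y : G, Fintype (X ⟶ Y)]
  {β : TwoCocycle G} (A : TwistedGroupoidAlgebra G β)

noncomputable def toEuclidean : A.carrier ≃ₗ[ℂ] EuclideanSpace ℂ (Mor G) :=
  A.basis.equiv (EuclideanSpace.basisFun (Mor G) ℂ).toBasis (Equiv.refl _)

theorem orthonormal_toEuclidean_basis : Orthonormal ℂ (A.toEuclidean ∘ A.basis) := by
  have hbasis : A.toEuclidean ∘ A.basis = EuclideanSpace.basisFun (Mor G) ℂ := by
    ext1 m
    simp [toEuclidean]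
  exact hbasis ▸ (EuclideanSpace.basisFun (Mor G) ℂ).orthonormal

theorem inner_toEuclidean_basis_self (m : Mor G) :
    ⟪A.toEuclidean (A.basis m), A.toEuclidean (A.basis m)⟫_ℂ = 1 := by
  rw [inner_self_eq_norm_sq_to_K, ← Function.comp_apply (f := A.toEuclidean),
    A.orthonormal_toEuclidean_basis.norm_eq_one]
  norm_num

theorem inner_toEuclidean_basis_of_ne {m m' : Mor G} (hm : m ≠ m') :
    ⟪A.toEuclidean (A.basis m), A.toEuclidean (A.basis m')⟫_ℂ = 0 :=
  A.orthonormal_toEuclidean_basis.inner_eq_zero hm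

noncomputable def basisAdjoint {X Y : G} (h : X ⟶ Y) : A.carrier :=
  conj (β.toFun (Groupoid.inv h) h) • A.basis ⟨Y, X, Groupoid.inv h⟩

theorem inner_basis_comp_mul_basis {U V Y Z : G} (h : U ⟶ V) (k : V ⟶ Z) (g : V ⟶ Y) :
    ⟪A.toEuclidean (A.basis ⟨U, Z, h ≫ k⟩),
        A.toEuclidean (A.basis ⟨U, V, h⟩ * A.basis ⟨V, Y, g⟩)⟫_ℂ =
      ⟪A.toEuclidean (A.basisAdjoint h * A.basis ⟨U, Z, h ≫ k⟩),
        A.toEuclidean (A.basis ⟨V, Y, g⟩)⟫_ℂ := by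
  rw [basisAdjoint, smul_mul_assoc, A.mul_basis_comp, A.mul_basis_comp, smul_smul]
  simp only [← Category.assoc, Groupoid.inv_comp, Category.id_comp, map_smul, inner_smul_left,
    inner_smul_right]
  by_cases hkg : (⟨V, Z, k⟩ : Mor G) = ⟨V, Y, g⟩
  · cases hkg
    rw [inner_toEuclidean_basis_self, inner_toEuclidean_basis_self, β.toFun_inv_comp, map_mul,
      map_mul, RCLike.conj_conj, RCLike.conj_conj, ← mul_assoc, β.mul_conj_toFun, one_mul]
  · have hne : (⟨U, Z, h ≫ k⟩ : Mor G) ≠ ⟨U, Y, h ≫ g⟩ := by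
      intro hcomp
      simp only [Sigma.mk.inj_iff, heq_eq_eq, true_and] at hcomp
      obtain ⟨rfl, hcomp⟩ := hcomp
      rw [heq_iff_eq, cancel_epi] at hcomp
      exact hkg (by rw [hcomp])
    rw [A.inner_toEuclidean_basis_of_ne hkg, A.inner_toEuclidean_basis_of_ne hne, mul_zero,
      mul_zero]

theorem inner_basis_mul_basis {U V : G} (h : U ⟶ V) (f g : Mor G) :
    ⟪A.toEuclidean (A.basis f), A.toEuclidean (A.basis ⟨U, V, h⟩ * A.basis g)⟫_ℂ =
      ⟪A.toEuclidean (A.basisAdjoint h * A.basis f), A.toEuclidean (A.basis g)⟫_ℂ := by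
  obtain ⟨W, Z, f⟩ := f
  obtain ⟨X, Y, g⟩ := g
  by_cases hVX : V = X
  · subst hVX
    by_cases hUW : U = W
    · subst hUW
      obtain ⟨k, rfl⟩ : ∃ k, f = h ≫ k := ⟨Groupoid.inv h ≫ f, by simp⟩
      exact A.inner_basis_comp_mul_basis h k g
    · rw [basisAdjoint, smul_mul_assoc, A.mul_basis_ncomp ⟨V, U, _⟩ ⟨W, Z, f⟩ hUW,
        A.mul_basis_comp, map_smul, inner_smul_right,
        A.inner_toEuclidean_basis_of_ne fun hWU => hUW (congrArg Sigma.fst hWU).symm]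
      simp
  · rw [A.mul_basis_ncomp ⟨U, V, h⟩ ⟨X, Y, g⟩ hVX]
    by_cases hUW : U = W
    · subst hUW
      rw [basisAdjoint, smul_mul_assoc, A.mul_basis_comp, map_smul, map_smul, inner_smul_left,
        inner_smul_left, A.inner_toEuclidean_basis_of_ne fun hVX' => hVX (congrArg Sigma.fst hVX')]
      simp
    · rw [basisAdjoint, smul_mul_assoc, A.mul_basis_ncomp ⟨V, U, _⟩ ⟨W, Z, f⟩ hUW]
      simp

theorem inner_basis_mul {U V : G} (h : U ⟶ V) (x y : A.carrier) :
    ⟪A.toEuclidean x, A.toEuclidean (A.basis ⟨U, V, h⟩ * y)⟫_ℂ =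
      ⟪A.toEuclidean (A.basisAdjoint h * x), A.toEuclidean y⟫_ℂ := by
  let e : A.carrier →ₗ[ℂ] EuclideanSpace ℂ (Mor G) := A.toEuclidean
  have hforms := LinearMap.ext_basis A.basis A.basis
    (B := ((innerₛₗ ℂ).comp e).compl₂ (e ∘ₗ LinearMap.mulLeft ℂ (A.basis ⟨U, V, h⟩)))
    (B' := ((innerₛₗ ℂ).comp (e ∘ₗ LinearMap.mulLeft ℂ (A.basisAdjoint h))).compl₂ e)
    (A.inner_basis_mul_basis h)
  exact LinearMap.congr_fun₂ hforms x y

end TwistedGroupoidAlgebra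

/-- The twisted groupoid algebra `ℂ[𝒢]^β` of a finite groupoid is a
semisimple ring: every left module over it is semisimple, i.e. a direct sum of simple
modules. -/
theorem twistedGroupoidAlgebra_isSemisimpleRing
    (G : Type) [Groupoid.{0} G] [Fintype G] [∀ X Y : G, Fintype (X ⟶ Y)]
    (β : TwoCocycle G) (A : TwistedGroupoidAlgebra G β) :
    IsSemisimpleRing A.carrier ∧
    ∀ (M : Type) [AddCommGroup M] [Module A.carrier M], IsSemisimpleModule A.carrier M := by
  have hring : IsSemisimpleRing A.carrier :=
    isSemisimpleModule_of_exists_adjoint A.toEuclidean A.basis.span_eq <| by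
      rintro _ ⟨⟨U, V, h⟩, rfl⟩
      exact ⟨A.basisAdjoint h, A.inner_basis_mul h⟩
  exact ⟨hring, fun _ _ _ => inferInstance⟩
end

section
/- Let G be a finite group and π a normalized U(1)-valued 4-cocycle on G, and let t²(π) := t(t(π)) be the 2-cocycle on the double loop groupoid Λ²G obtained by transgressing the 3-cocycle t(π) on ΛG. Then: (i) t²(π)((e, a) → h, (e, h⁻¹ah) → h') = 1 for all a, h, h' ∈ G, where e is the identity of G; and (ii) consequently, the linear span of the basis vectors |(e,a) → h⟩ (a, h ∈ G) inside the twisted groupoid algebra ℂ[Λ²G]^{t²(π)} is closed under the product ⋆, and, with unit Σ_{a ∈ G} |(e,a) → e⟩, the map |(e,a) → h⟩ ↦ |a → h⟩ is an isomorphism of unital ℂ-algebras onto the untwisted groupoid algebra ℂ[ΛG]. -/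
/-- The double transgression `t²(π) = t(t(π))`, a 2-cocycle on the double loop groupoid
`Λ²G`, evaluated on the composable pair `((x,a) → h, (x^h,a^h) → h')`:
`t²(π) = t(π)(x;a,h,h') · t(π)(x;h,h',a^{hh'}) · t(π)(x;h,a^h,h')⁻¹`. -/
noncomputable def t2pi {G : Type} [Group G] (π : FourCocycle G) (x a h h' : G) : ℂ :=
  tpi π x a h h' * tpi π x h h' (cj a (h * h')) * (tpi π x h (cj a h) h')⁻¹

/-- Morphisms of the double loop groupoid `Λ²G`: triples `(x, a, h)` with `x a = a x`,
representing the morphism `((x,a) → h)`. -/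
abbrev L2Mor (G : Type) [Group G] : Type := {p : G × G × G // p.1 * p.2.1 = p.2.1 * p.1}

section

variable {G : Type} [Group G] [Fintype G] [DecidableEq G]

/-- The basis vector `|(x,a) → h⟩` of `ℂ[Λ²G]^{t²(π)}`. -/
noncomputable def bv2L (p : L2Mor G) : L2Mor G → ℂ := fun m => if m = p then 1 else 0

/-- The product of the twisted groupoid algebra `ℂ[Λ²G]^{t²(π)}`:
`|(x,a) → h⟩ ⋆ |(x',a') → h'⟩ = δ_{(x',a'),(x^h,a^h)} t²(π)(x,a,h,h') |(x,a) → hh'⟩`. -/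
noncomputable def mul2L (π : FourCocycle G) (x y : L2Mor G → ℂ) : L2Mor G → ℂ :=
  fun m => ∑ p : L2Mor G, ∑ q : L2Mor G,
    if p.1.1 = m.1.1 ∧ p.1.2.1 = m.1.2.1 ∧ q.1.1 = cj p.1.1 p.1.2.2 ∧
        q.1.2.1 = cj p.1.2.1 p.1.2.2 ∧ p.1.2.2 * q.1.2.2 = m.1.2.2
    then t2pi π p.1.1 p.1.2.1 p.1.2.2 q.1.2.2 * x p * y q
    else 0

/-- The product of the untwisted groupoid algebra `ℂ[ΛG]`:
`|a → h⟩ ⋆ |a' → h'⟩ = δ_{a', h⁻¹ah} |a → hh'⟩`, on functions on pairs `(a, h)`. -/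
noncomputable def mulLG (x y : G × G → ℂ) : G × G → ℂ :=
  fun m => ∑ p : G × G, ∑ q : G × G,
    if p.1 = m.1 ∧ q.1 = cj p.1 p.2 ∧ p.2 * q.2 = m.2 then x p * y q else 0

/-- The set of elements of `ℂ[Λ²G]^{t²(π)}` supported on the basis vectors `|(e,a) → h⟩`,
i.e. the linear span of these basis vectors. -/
def SuppE (G : Type) [Group G] : Set (L2Mor G → ℂ) :=
  {z | ∀ m : L2Mor G, m.1.1 ≠ 1 → z m = 0}

/-- The linear map determined by `|(e,a) → h⟩ ↦ |a → h⟩`, realized on coordinates. -/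
noncomputable def Theta (G : Type) [Group G] (z : L2Mor G → ℂ) : G × G → ℂ :=
  fun ah => z ⟨(1, ah.1, ah.2), by simp⟩

/-- The element `∑_{a ∈ G} |(e,a) → e⟩` of `ℂ[Λ²G]^{t²(π)}`. -/
noncomputable def uE (G : Type) [Group G] [Fintype G] [DecidableEq G] : L2Mor G → ℂ :=
  ∑ a : G, bv2L (⟨(1, a, 1), by simp⟩ : L2Mor G)

/-- The unit `∑_{a ∈ G} |a → e⟩` of the untwisted groupoid algebra `ℂ[ΛG]`. -/
noncomputable def uLG (G : Type) [Group G] [Fintype G] [DecidableEq G] : G × G → ℂ :=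
  ∑ a : G, (fun m : G × G => if m = (a, 1) then (1 : ℂ) else 0)

end

/-!
At the loop `x = e` every factor of `t(π)` has an argument equal to `e`, because `e^b = e`;
so `t(π)` is trivial there and `t²(π)`, built from `t(π)` at `x = e`, is trivial on every
morphism `(e,a) → h`. On these morphisms the composability condition of `Λ²G` is exactly that
of `ΛG` (`e^h = e` holds automatically), so with trivial twist the structure constants of the
two algebras agree under `(e,a) → h ↦ a → h`; the unit laws are then transported from `ℂ[ΛG]`.
-/

section Transgression

variable {G : Type} [Group G]

lemma cj_one_left (y : G) : cj (1 : G) y = 1 := by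
  simp [cj]

lemma tpi_one_left (π : FourCocycle G) (b c d : G) : tpi π 1 b c d = 1 := by
  simp only [tpi, cj_one_left, π.normalized b 1 c d (by simp), π.normalized b c d 1 (by simp),
    π.normalized 1 b c d (by simp), π.normalized b c 1 d (by simp), inv_one, mul_one]

lemma t2pi_one_left (π : FourCocycle G) (a h h' : G) : t2pi π 1 a h h' = 1 := by
  simp only [t2pi, tpi_one_left, inv_one, mul_one]

end Transgression

namespace L2Mor

variable {G : Type} [Group G]

def atOne (ah : G × G) : L2Mor G := ⟨(1, ah.1, ah.2), by simp⟩

lemma atOne_injective : Function.Injective (atOne (G := G)) := by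
  intro p q hpq
  simpa [atOne] using congrArg (fun m : L2Mor G => (m.1.2.1, m.1.2.2)) hpq

lemma atOne_of_fst_eq_one {m : L2Mor G} (hm : m.1.1 = 1) : atOne (m.1.2.1, m.1.2.2) = m :=
  Subtype.ext (Prod.ext hm.symm rfl)

lemma sum_eq_sum_atOne [Fintype G] [DecidableEq G] {M : Type} [AddCommMonoid M]
    (F : L2Mor G → M) (hF : ∀ m : L2Mor G, m.1.1 ≠ 1 → F m = 0) :
    ∑ m, F m = ∑ ah : G × G, F (atOne ah) :=
  (Fintype.sum_of_injective atOne atOne_injective _ F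
    (fun m hm => hF m fun h1 => hm ⟨_, atOne_of_fst_eq_one h1⟩) fun _ => rfl).symm

end L2Mor

open L2Mor

section Subalgebra

variable {G : Type} [Group G]

lemma Theta_apply (z : L2Mor G → ℂ) (ah : G × G) : Theta G z ah = z (atOne ah) := rfl

lemma Theta_bijOn : Set.BijOn (Theta G) (SuppE G) Set.univ := by
  classical
  refine ⟨fun _ _ => Set.mem_univ _, fun x hx y hy hxy => ?_, fun w _ => ?_⟩
  · funext m
    by_cases hm : m.1.1 = 1
    · rw [← atOne_of_fst_eq_one hm]
      exact congrFun hxy _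
    · rw [hx m hm, hy m hm]
  · refine ⟨fun m => if m.1.1 = 1 then w (m.1.2.1, m.1.2.2) else 0, fun m hm => if_neg hm, ?_⟩
    funext ah
    simp [Theta_apply, atOne]

variable [Fintype G] [DecidableEq G] (π : FourCocycle G)

lemma mul2L_mem_suppE {x : L2Mor G → ℂ} (hx : x ∈ SuppE G) (y : L2Mor G → ℂ) :
    mul2L π x y ∈ SuppE G := by
  intro m hm
  refine Finset.sum_eq_zero fun p _ => Finset.sum_eq_zero fun q _ => ?_
  split_ifs with hpq
  · rw [hx p (hpq.1 ▸ hm), mul_zero, zero_mul]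
  · rfl

lemma Theta_mul {x y : L2Mor G → ℂ} (hx : x ∈ SuppE G) (hy : y ∈ SuppE G) :
    Theta G (mul2L π x y) = mulLG (Theta G x) (Theta G y) := by
  funext ah
  rw [Theta_apply, mul2L, sum_eq_sum_atOne]
  · refine Finset.sum_congr rfl fun p _ => ?_
    rw [sum_eq_sum_atOne]
    · refine Finset.sum_congr rfl fun q _ => ?_
      simp [atOne, cj_one_left, t2pi_one_left, Theta_apply]
    · intro q hq
      split_ifs <;> simp [hy q hq]
  · intro p hp
    refine Finset.sum_eq_zero fun q _ => ?_
    split_ifs <;> simp [hx p hp]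

end Subalgebra

section Units

variable {G : Type} [Group G] [Fintype G] [DecidableEq G]

lemma uLG_apply (p : G × G) : uLG G p = if p.2 = 1 then 1 else 0 := by
  simp [uLG, Finset.sum_apply, Prod.ext_iff, ite_and]

lemma uLG_mulLG (w : G × G → ℂ) : mulLG (uLG G) w = w := by
  funext m
  simp [mulLG, uLG_apply, Fintype.sum_prod_type, ite_and, cj, ← eq_inv_mul_iff_mul_eq]

lemma mulLG_uLG (w : G × G → ℂ) : mulLG w (uLG G) = w := by
  funext m
  simp only [mulLG, cj, ← eq_mul_inv_iff_mul_eq, uLG_apply, mul_ite, mul_one, mul_zero, ite_and,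
    Finset.sum_ite_irrel, Fintype.sum_prod_type, Finset.sum_const_zero, Finset.sum_ite_eq',
    Finset.mem_univ, ↓reduceIte]
  rw [Finset.sum_comm]
  simp

lemma uE_mem_suppE : uE G ∈ SuppE G := by
  intro m hm
  simp only [uE, Finset.sum_apply, bv2L]
  exact Finset.sum_eq_zero fun a _ => if_neg fun h => hm (by rw [h])

lemma Theta_uE : Theta G (uE G) = uLG G := by
  funext ah
  simp [Theta_apply, uLG_apply, uE, Finset.sum_apply, bv2L, atOne, Subtype.ext_iff, Prod.ext_iff,
    ite_and]

variable (π : FourCocycle G)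

lemma uE_mul2L {x : L2Mor G → ℂ} (hx : x ∈ SuppE G) : mul2L π (uE G) x = x :=
  Theta_bijOn.injOn (mul2L_mem_suppE π uE_mem_suppE x) hx <| by
    rw [Theta_mul π uE_mem_suppE hx, Theta_uE, uLG_mulLG]

lemma mul2L_uE {x : L2Mor G → ℂ} (hx : x ∈ SuppE G) : mul2L π x (uE G) = x :=
  Theta_bijOn.injOn (mul2L_mem_suppE π hx (uE G)) hx <| by
    rw [Theta_mul π hx uE_mem_suppE, Theta_uE, mulLG_uLG]

end Units

/-- (i) `t²(π)` is trivial on morphisms out of objects `(e,a)` of `Λ²G`;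
(ii) consequently the span of the basis vectors `|(e,a) → h⟩` of `ℂ[Λ²G]^{t²(π)}` is closed
under `⋆` and, with unit `∑_a |(e,a) → e⟩`, the map `|(e,a) → h⟩ ↦ |a → h⟩` is an
isomorphism of unital `ℂ`-algebras onto the untwisted groupoid algebra `ℂ[ΛG]`. -/
theorem t2pi_trivial_and_subalgebra_iso
    (G : Type) [Group G] [Fintype G] [DecidableEq G] (π : FourCocycle G) :
    (∀ a h h' : G, t2pi π 1 a h h' = 1) ∧
    (∀ x y : L2Mor G → ℂ, x ∈ SuppE G → y ∈ SuppE G → mul2L π x y ∈ SuppE G) ∧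
    (∀ x ∈ SuppE G, mul2L π (uE G) x = x ∧ mul2L π x (uE G) = x) ∧
    Set.BijOn (Theta G) (SuppE G) Set.univ ∧
    (∀ x y : L2Mor G → ℂ, x ∈ SuppE G → y ∈ SuppE G →
      Theta G (mul2L π x y) = mulLG (Theta G x) (Theta G y)) ∧
    (∀ x y : L2Mor G → ℂ, Theta G (x + y) = Theta G x + Theta G y) ∧
    (∀ (c : ℂ) (x : L2Mor G → ℂ), Theta G (c • x) = c • Theta G x) ∧
    Theta G (uE G) = uLG G :=
  ⟨t2pi_one_left π,
    fun _ y hx _ => mul2L_mem_suppE π hx y,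
    fun _ hx => ⟨uE_mul2L π hx, mul2L_uE π hx⟩,
    Theta_bijOn,
    fun _ _ hx hy => Theta_mul π hx hy,
    fun _ _ => rfl,
    fun _ _ => rfl,
    Theta_uE⟩
end
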